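/- Let ABC be a triangle perspective with triangle A'B'C' (e.g., a triangle and its polar triangle with respect to a conic). Define A_b = b∩a', A_c = c∩a', B_a = a∩b', B_c = c∩b', C_a = a∩c', C_b = b∩c', where a=BC, b=CA, c=AB and a'=B'C', b'=C'A', c'=A'B'. Then the six points A_b, A_c, B_a, B_c, C_a, C_b lie on a conic. -/
import Mathlib
set_option maxRecDepth 10000
set_option maxHeartbeats 8000000


open Matrix

/-- Points (and, dually, lines) of the real projective plane are represented by
nonzero vectors of `ℝ³`; `dot3` is the incidence pairing. -/
def dot3 (u v : Fin 3 → ℝ) : ℝ := u 0 * v 0 + u 1 * v 1 + u 2 * v 2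

/-- The (projective points represented by) three vectors are collinear: some nonzero
line form vanishes on all of them. -/
def Coll (a b c : Fin 3 → ℝ) : Prop :=
  ∃ l : Fin 3 → ℝ, l ≠ 0 ∧ dot3 l a = 0 ∧ dot3 l b = 0 ∧ dot3 l c = 0

/-- `CRv a b c d k`: the cross ratio `(abcd)` of four collinear projective points
(represented by the given vectors) equals `k`.  Writing `c = x•a + y•b` and
`d = z•a + w•b`, the cross ratio is `(y/x)/(w/z) = (y*z)/(x*w)`; this value is
independent of the chosen representative vectors. -/
def CRv (a b c d : Fin 3 → ℝ) (k : ℝ) : Prop :=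
  ∃ x y z w : ℝ, c = x • a + y • b ∧ d = z • a + w • b ∧ x * w ≠ 0 ∧
    k = (y * z) / (x * w)

def cross3 (u v : Fin 3 → ℝ) : Fin 3 → ℝ :=
  ![u 1 * v 2 - u 2 * v 1, u 2 * v 0 - u 0 * v 2, u 0 * v 1 - u 1 * v 0]

lemma coll_iff_det (u v w : Fin 3 → ℝ) :
    Coll u v w ↔ (Matrix.of ![u, v, w]).det = 0 := by
  rw [← Matrix.exists_mulVec_eq_zero_iff]
  constructor
  · rintro ⟨l, hl, h1, h2, h3⟩
    simp only [dot3] at h1 h2 h3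
    refine ⟨l, hl, ?_⟩
    funext i
    fin_cases i <;>
      simp [Matrix.mulVec, dotProduct, Fin.sum_univ_three] <;> linarith
  · rintro ⟨l, hl, h⟩
    have h0 := congrFun h 0
    have h1 := congrFun h 1
    have h2 := congrFun h 2
    simp [Matrix.mulVec, dotProduct, Fin.sum_univ_three] at h0 h1 h2
    exact ⟨l, hl, by simp [dot3]; linarith, by simp [dot3]; linarith,
      by simp [dot3]; linarith⟩

lemma det_eq_dot_cross (u v w : Fin 3 → ℝ) :
    (Matrix.of ![u, v, w]).det = dot3 u (cross3 v w) := by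
  simp [Matrix.det_fin_three, dot3, cross3]; ring

lemma dot3_cross_self (u v : Fin 3 → ℝ) : dot3 (cross3 u v) u = 0 := by
  simp [dot3, cross3]; ring

lemma dot3_cross_self' (u v : Fin 3 → ℝ) : dot3 (cross3 u v) v = 0 := by
  simp [dot3, cross3]; ring

lemma cross_cross_eq_zero {l u v : Fin 3 → ℝ} (h1 : dot3 l u = 0) (h2 : dot3 l v = 0) :
    cross3 l (cross3 u v) = 0 := by
  simp only [dot3] at h1 h2
  funext i
  fin_cases i <;> simp [cross3] <;>
    [linear_combination u 0 * h2 - v 0 * h1;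
     linear_combination u 1 * h2 - v 1 * h1;
     linear_combination u 2 * h2 - v 2 * h1]

lemma cross_eq_zero_imp {x y : Fin 3 → ℝ} (h : cross3 x y = 0) (hy : y ≠ 0) :
    ∃ t : ℝ, x = t • y := by
  have h0 := congrFun h 0
  have h1 := congrFun h 1
  have h2 := congrFun h 2
  simp [cross3, sub_eq_zero] at h0 h1 h2
  rcases Function.ne_iff.mp hy with ⟨i, hi⟩
  fin_cases i
  · have hy0 : y 0 ≠ 0 := by simpa using hi
    refine ⟨x 0 / y 0, funext fun j => ?_⟩
    fin_cases j <;> simp <;> field_simp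
    · linear_combination -h2
    · linear_combination h1
  · have hy1 : y 1 ≠ 0 := by simpa using hi
    refine ⟨x 1 / y 1, funext fun j => ?_⟩
    fin_cases j <;> simp <;> field_simp
    · linear_combination h2
    · linear_combination -h0
  · have hy2 : y 2 ≠ 0 := by simpa using hi
    refine ⟨x 2 / y 2, funext fun j => ?_⟩
    fin_cases j <;> simp <;> field_simp
    · linear_combination -h1
    · linear_combination h0

/-- From collinearity with two points spanning a line, the cross-product line form
vanishes on the third point. -/
lemma coll_dot_cross {u v w : Fin 3 → ℝ} (h : Coll u v w) (huv : cross3 u v ≠ 0) :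
    dot3 (cross3 u v) w = 0 := by
  obtain ⟨l, hl, h1, h2, h3⟩ := h
  obtain ⟨t, ht⟩ := cross_eq_zero_imp (cross_cross_eq_zero h1 h2) huv
  have hts : t ≠ 0 := by
    rintro rfl
    rw [zero_smul] at ht
    exact hl ht
  rw [ht] at h3
  have h4 : t * dot3 (cross3 u v) w = 0 := by
    simp only [dot3, Pi.smul_apply, smul_eq_mul] at h3 ⊢
    linear_combination h3
  rcases mul_eq_zero.mp h4 with h5 | h5
  · exact absurd h5 hts
  · exact h5

lemma coll_rot {u v w : Fin 3 → ℝ} (h : Coll u v w) : Coll w u v := by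
  obtain ⟨l, hl, h1, h2, h3⟩ := h
  exact ⟨l, hl, h3, h1, h2⟩

/-- 1-dim kernel of a nonzero functional on ℝ². -/
lemma ker2 {u v x y : ℝ} (h : u * x + v * y = 0) (hne : ¬(u = 0 ∧ v = 0)) :
    ∃ s : ℝ, x = s * v ∧ y = -(s * u) := by
  by_cases hu : u = 0
  · have hv : v ≠ 0 := fun hv => hne ⟨hu, hv⟩
    have hy : y = 0 := by
      subst hu
      rcases mul_eq_zero.mp (by linear_combination h : v * y = 0) with h' | h'
      · exact absurd h' hv
      · exact h'
    exact ⟨x / v, by field_simp, by rw [hu, hy]; ring⟩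
  · refine ⟨-(y / u), ?_, by field_simp⟩
    field_simp
    linear_combination h

lemma cross_ne_of_not_coll {u v w : Fin 3 → ℝ} (h : ¬Coll w u v) : cross3 u v ≠ 0 := by
  intro hc
  apply h
  rw [coll_iff_det, det_eq_dot_cross, hc]
  simp [dot3]

lemma coll_e2e0 {P : Fin 3 → ℝ} (h : Coll ![0,0,1] ![1,0,0] P) : P 1 = 0 := by
  obtain ⟨l, hl, h1, h2, h3⟩ := h
  simp [dot3] at h1 h2 h3
  have hl1 : l 1 ≠ 0 := by
    intro h0
    apply hl
    funext i
    fin_cases i <;> simp [h0, h1, h2]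
  rcases mul_eq_zero.mp (by linear_combination h3 - P 0 * h2 - P 2 * h1 : l 1 * P 1 = 0) with h | h
  · exact absurd h hl1
  · exact h

lemma coll_e0e1 {P : Fin 3 → ℝ} (h : Coll ![1,0,0] ![0,1,0] P) : P 2 = 0 := by
  obtain ⟨l, hl, h1, h2, h3⟩ := h
  simp [dot3] at h1 h2 h3
  have hl2 : l 2 ≠ 0 := by
    intro h0
    apply hl
    funext i
    fin_cases i <;> simp [h0, h1, h2]
  rcases mul_eq_zero.mp (by linear_combination h3 - P 0 * h1 - P 1 * h2 : l 2 * P 2 = 0) with h | h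
  · exact absurd h hl2
  · exact h

lemma coll_e1e2 {P : Fin 3 → ℝ} (h : Coll ![0,1,0] ![0,0,1] P) : P 0 = 0 := by
  obtain ⟨l, hl, h1, h2, h3⟩ := h
  simp [dot3] at h1 h2 h3
  have hl0 : l 0 ≠ 0 := by
    intro h0
    apply hl
    funext i
    fin_cases i <;> simp [h0, h1, h2]
  rcases mul_eq_zero.mp (by linear_combination h3 - P 1 * h1 - P 2 * h2 : l 0 * P 0 = 0) with h | h
  · exact absurd h hl0
  · exact h

set_option maxHeartbeats 8000000 in
lemma coord_case (O A' B' C' Ab Ac Ba Bc Ca Cb : Fin 3 → ℝ)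
    (hA'B'C' : ¬Coll A' B' C')
    (hO : O ≠ 0)
    (hpA : Coll ![1,0,0] A' O) (hpB : Coll ![0,1,0] B' O) (hpC : Coll ![0,0,1] C' O)
    (hba' : ¬(Coll ![0,0,1] ![1,0,0] B' ∧ Coll ![0,0,1] ![1,0,0] C'))
    (hca' : ¬(Coll ![1,0,0] ![0,1,0] B' ∧ Coll ![1,0,0] ![0,1,0] C'))
    (hab' : ¬(Coll ![0,1,0] ![0,0,1] C' ∧ Coll ![0,1,0] ![0,0,1] A'))
    (hcb' : ¬(Coll ![1,0,0] ![0,1,0] C' ∧ Coll ![1,0,0] ![0,1,0] A'))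
    (hac' : ¬(Coll ![0,1,0] ![0,0,1] A' ∧ Coll ![0,1,0] ![0,0,1] B'))
    (hbc' : ¬(Coll ![0,0,1] ![1,0,0] A' ∧ Coll ![0,0,1] ![1,0,0] B'))
    (hAb : Ab ≠ 0) (hAb1 : Coll ![0,0,1] ![1,0,0] Ab) (hAb2 : Coll B' C' Ab)
    (hAc : Ac ≠ 0) (hAc1 : Coll ![1,0,0] ![0,1,0] Ac) (hAc2 : Coll B' C' Ac)
    (hBa : Ba ≠ 0) (hBa1 : Coll ![0,1,0] ![0,0,1] Ba) (hBa2 : Coll C' A' Ba)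
    (hBc : Bc ≠ 0) (hBc1 : Coll ![1,0,0] ![0,1,0] Bc) (hBc2 : Coll C' A' Bc)
    (hCa : Ca ≠ 0) (hCa1 : Coll ![0,1,0] ![0,0,1] Ca) (hCa2 : Coll A' B' Ca)
    (hCb : Cb ≠ 0) (hCb1 : Coll ![0,0,1] ![1,0,0] Cb) (hCb2 : Coll A' B' Cb) :
    ∃ N : Matrix (Fin 3) (Fin 3) ℝ, N.IsSymm ∧ N ≠ 0 ∧
      dot3 Ab (N.mulVec Ab) = 0 ∧ dot3 Ac (N.mulVec Ac) = 0 ∧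
      dot3 Ba (N.mulVec Ba) = 0 ∧ dot3 Bc (N.mulVec Bc) = 0 ∧
      dot3 Ca (N.mulVec Ca) = 0 ∧ dot3 Cb (N.mulVec Cb) = 0 := by
  -- the three line forms of the second triangle
  obtain ⟨α, hα⟩ : ∃ x, x = cross3 B' C' := ⟨_, rfl⟩
  obtain ⟨β, hβ⟩ : ∃ x, x = cross3 C' A' := ⟨_, rfl⟩
  obtain ⟨γ, hγ⟩ : ∃ x, x = cross3 A' B' := ⟨_, rfl⟩
  have hcBC : cross3 B' C' ≠ 0 := cross_ne_of_not_coll hA'B'C'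
  have hcCA : cross3 C' A' ≠ 0 :=
    cross_ne_of_not_coll (fun h => hA'B'C' (coll_rot h))
  have hcAB : cross3 A' B' ≠ 0 :=
    cross_ne_of_not_coll (fun h => hA'B'C' (coll_rot (coll_rot h)))
  have hαne : α ≠ 0 := hα ▸ hcBC
  have hβne : β ≠ 0 := hβ ▸ hcCA
  have hγne : γ ≠ 0 := hγ ▸ hcAB
  -- line incidences for the six points
  have dAb : dot3 α Ab = 0 := hα ▸ coll_dot_cross hAb2 hcBC
  have dAc : dot3 α Ac = 0 := hα ▸ coll_dot_cross hAc2 hcBC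
  have dBa : dot3 β Ba = 0 := hβ ▸ coll_dot_cross hBa2 hcCA
  have dBc : dot3 β Bc = 0 := hβ ▸ coll_dot_cross hBc2 hcCA
  have dCa : dot3 γ Ca = 0 := hγ ▸ coll_dot_cross hCa2 hcAB
  have dCb : dot3 γ Cb = 0 := hγ ▸ coll_dot_cross hCb2 hcAB
  -- coordinate vanishing
  have zAb : Ab 1 = 0 := coll_e2e0 hAb1
  have zCb : Cb 1 = 0 := coll_e2e0 hCb1
  have zAc : Ac 2 = 0 := coll_e0e1 hAc1
  have zBc : Bc 2 = 0 := coll_e0e1 hBc1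
  have zBa : Ba 0 = 0 := coll_e1e2 hBa1
  have zCa : Ca 0 = 0 := coll_e1e2 hCa1
  -- incidence dot products for α, β, γ with the primed vertices
  have dαB' : dot3 α B' = 0 := hα ▸ dot3_cross_self B' C'
  have dαC' : dot3 α C' = 0 := hα ▸ dot3_cross_self' B' C'
  have dβC' : dot3 β C' = 0 := hβ ▸ dot3_cross_self C' A'
  have dβA' : dot3 β A' = 0 := hβ ▸ dot3_cross_self' C' A'
  have dγA' : dot3 γ A' = 0 := hγ ▸ dot3_cross_self A' B'
  have dγB' : dot3 γ B' = 0 := hγ ▸ dot3_cross_self' A' B'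
  -- the lines of the two triangles are pairwise distinct where needed
  have hα02 : ¬(α 0 = 0 ∧ α 2 = 0) := by
    rintro ⟨h0, h2⟩
    exact hba' ⟨⟨α, hαne, by simp [dot3, h2], by simp [dot3, h0], dαB'⟩,
      ⟨α, hαne, by simp [dot3, h2], by simp [dot3, h0], dαC'⟩⟩
  have hα01 : ¬(α 0 = 0 ∧ α 1 = 0) := by
    rintro ⟨h0, h1⟩
    exact hca' ⟨⟨α, hαne, by simp [dot3, h0], by simp [dot3, h1], dαB'⟩,
      ⟨α, hαne, by simp [dot3, h0], by simp [dot3, h1], dαC'⟩⟩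
  have hβ12 : ¬(β 1 = 0 ∧ β 2 = 0) := by
    rintro ⟨h1, h2⟩
    exact hab' ⟨⟨β, hβne, by simp [dot3, h1], by simp [dot3, h2], dβC'⟩,
      ⟨β, hβne, by simp [dot3, h1], by simp [dot3, h2], dβA'⟩⟩
  have hβ01 : ¬(β 0 = 0 ∧ β 1 = 0) := by
    rintro ⟨h0, h1⟩
    exact hcb' ⟨⟨β, hβne, by simp [dot3, h0], by simp [dot3, h1], dβC'⟩,
      ⟨β, hβne, by simp [dot3, h0], by simp [dot3, h1], dβA'⟩⟩
  have hγ12 : ¬(γ 1 = 0 ∧ γ 2 = 0) := by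
    rintro ⟨h1, h2⟩
    exact hac' ⟨⟨γ, hγne, by simp [dot3, h1], by simp [dot3, h2], dγA'⟩,
      ⟨γ, hγne, by simp [dot3, h1], by simp [dot3, h2], dγB'⟩⟩
  have hγ02 : ¬(γ 0 = 0 ∧ γ 2 = 0) := by
    rintro ⟨h0, h2⟩
    exact hbc' ⟨⟨γ, hγne, by simp [dot3, h2], by simp [dot3, h0], dγA'⟩,
      ⟨γ, hγne, by simp [dot3, h2], by simp [dot3, h0], dγB'⟩⟩
  -- parametrize the six points
  simp only [dot3] at dAb dAc dBa dBc dCa dCb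
  obtain ⟨s1, hs1x, hs1y⟩ := ker2 (by linear_combination dAb - Ab 1 * (by rfl : α 1 = α 1) - α 1 * zAb :
    α 0 * Ab 0 + α 2 * Ab 2 = 0) hα02
  obtain ⟨s3, hs3x, hs3y⟩ := ker2 (by linear_combination dAc - α 2 * zAc :
    α 0 * Ac 0 + α 1 * Ac 1 = 0) hα01
  obtain ⟨s5, hs5x, hs5y⟩ := ker2 (by linear_combination dBa - β 0 * zBa :
    β 1 * Ba 1 + β 2 * Ba 2 = 0) hβ12
  obtain ⟨s4, hs4x, hs4y⟩ := ker2 (by linear_combination dBc - β 2 * zBc :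
    β 0 * Bc 0 + β 1 * Bc 1 = 0) hβ01
  obtain ⟨s6, hs6x, hs6y⟩ := ker2 (by linear_combination dCa - γ 0 * zCa :
    γ 1 * Ca 1 + γ 2 * Ca 2 = 0) hγ12
  obtain ⟨s2, hs2x, hs2y⟩ := ker2 (by linear_combination dCb - γ 1 * zCb :
    γ 0 * Cb 0 + γ 2 * Cb 2 = 0) hγ02
  have hAbv : Ab = ![s1 * α 2, 0, -(s1 * α 0)] := by
    funext i; fin_cases i <;> simp [hs1x, hs1y, zAb]
  have hCbv : Cb = ![s2 * γ 2, 0, -(s2 * γ 0)] := by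
    funext i; fin_cases i <;> simp [hs2x, hs2y, zCb]
  have hAcv : Ac = ![s3 * α 1, -(s3 * α 0), 0] := by
    funext i; fin_cases i <;> simp [hs3x, hs3y, zAc]
  have hBcv : Bc = ![s4 * β 1, -(s4 * β 0), 0] := by
    funext i; fin_cases i <;> simp [hs4x, hs4y, zBc]
  have hBav : Ba = ![0, s5 * β 2, -(s5 * β 1)] := by
    funext i; fin_cases i <;> simp [hs5x, hs5y, zBa]
  have hCav : Ca = ![0, s6 * γ 2, -(s6 * γ 1)] := by
    funext i; fin_cases i <;> simp [hs6x, hs6y, zCa]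
  -- perspectivity equations
  have hg1 : A' 1 * O 2 - A' 2 * O 1 = 0 := by
    have h := (coll_iff_det _ _ _).mp hpA
    simp [Matrix.det_fin_three] at h
    linear_combination h
  have hg2 : B' 2 * O 0 - B' 0 * O 2 = 0 := by
    have h := (coll_iff_det _ _ _).mp hpB
    simp [Matrix.det_fin_three] at h
    linear_combination h
  have hg3 : C' 0 * O 1 - C' 1 * O 0 = 0 := by
    have h := (coll_iff_det _ _ _).mp hpC
    simp [Matrix.det_fin_three] at h
    linear_combination h
  -- the key multiplicative relation
  have hF : A' 1 * B' 2 * C' 0 - A' 2 * B' 0 * C' 1 = 0 := by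
    rcases Function.ne_iff.mp hO with ⟨i, hi⟩
    fin_cases i
    · have hi' : O 0 ≠ 0 := by simpa using hi
      rcases mul_eq_zero.mp (by linear_combination (B' 0 * C' 0) * hg1 + (A' 1 * C' 0) * hg2 +
        (A' 2 * B' 0) * hg3 : O 0 * (A' 1 * B' 2 * C' 0 - A' 2 * B' 0 * C' 1) = 0) with h | h
      · exact absurd h hi'
      · exact h
    · have hi' : O 1 ≠ 0 := by simpa using hi
      rcases mul_eq_zero.mp (by linear_combination (C' 1 * B' 0) * hg1 + (C' 1 * A' 1) * hg2 +
        (A' 1 * B' 2) * hg3 : O 1 * (A' 1 * B' 2 * C' 0 - A' 2 * B' 0 * C' 1) = 0) with h | h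
      · exact absurd h hi'
      · exact h
    · have hi' : O 2 ≠ 0 := by simpa using hi
      rcases mul_eq_zero.mp (by linear_combination (B' 2 * C' 0) * hg1 + (A' 2 * C' 1) * hg2 +
        (A' 2 * B' 2) * hg3 : O 2 * (A' 1 * B' 2 * C' 0 - A' 2 * B' 0 * C' 1) = 0) with h | h
      · exact absurd h hi'
      · exact h
  have hM : α 1 * β 2 * γ 0 - α 2 * β 0 * γ 1 = 0 := by
    rw [hα, hβ, hγ]
    simp [cross3]
    linear_combination (A' 0 * B' 1 * C' 2 - A' 0 * B' 2 * C' 1 - A' 1 * B' 0 * C' 2 +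
      A' 1 * B' 2 * C' 0 + A' 2 * B' 0 * C' 1 - A' 2 * B' 1 * C' 0) * hF
  -- the 6×6 "Veronese" matrix of the six points is singular
  have hdetV : (Matrix.of ![![α 2^2, 0, α 0^2, 0, -(2*α 2*α 0), 0],
       ![γ 2^2, 0, γ 0^2, 0, -(2*γ 2*γ 0), 0],
       ![α 1^2, α 0^2, 0, -(2*α 1*α 0), 0, 0],
       ![β 1^2, β 0^2, 0, -(2*β 1*β 0), 0, 0],
       ![(0:ℝ), β 2^2, β 1^2, 0, 0, -(2*β 2*β 1)],
       ![0, γ 2^2, γ 1^2, 0, 0, -(2*γ 2*γ 1)]]).det = 0 := by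
    simp (config := { decide := true, maxSteps := 10000000 }) only [Matrix.det_succ_row_zero,
      Fin.sum_univ_succ, Matrix.submatrix_apply, Fin.succAbove, Fin.lt_def, Fin.castSucc,
      Fin.castAdd, Fin.castLE, Matrix.cons_val', Matrix.cons_val_zero, Matrix.cons_val_succ,
      Matrix.head_cons, Matrix.of_apply, Matrix.cons_val_fin_one, Matrix.head_fin_const,
      Matrix.det_unique, Fin.default_eq_zero, Finset.univ_unique, Finset.sum_singleton,
      Matrix.cons_val_one, Fin.val_succ, Fin.val_zero, pow_succ, pow_zero, Fin.succ]
    norm_num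
    linear_combination (8 * α 0 * β 1 * γ 2 * (α 2 * γ 0 - α 0 * γ 2) * (α 1 * β 0 - α 0 * β 1) *
      (β 2 * γ 1 - β 1 * γ 2)) * hM
  obtain ⟨c, hc0, hc⟩ := Matrix.exists_mulVec_eq_zero_iff.mpr hdetV
  have ec0 := congrFun hc 0
  have ec1 := congrFun hc 1
  have ec2 := congrFun hc 2
  have ec3 := congrFun hc 3
  have ec4 := congrFun hc 4
  have ec5 := congrFun hc 5
  have v5 : ∀ {κ : Type} (x0 x1 x2 x3 x4 x5 : κ), ![x0,x1,x2,x3,x4,x5] (5 : Fin 6) = x5 :=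
    fun _ _ _ _ _ _ => rfl
  have w5 : ∀ (x0 : ℝ) (f : Fin 5 → ℝ), Matrix.vecCons x0 f (5 : Fin 6) = f 4 :=
    fun _ _ => rfl
  simp [Matrix.mulVec, dotProduct, Fin.sum_univ_six, v5, w5] at ec0 ec1 ec2 ec3 ec4 ec5
  refine ⟨!![c 0, c 3, c 4; c 3, c 1, c 5; c 4, c 5, c 2], ?_, ?_, ?_, ?_, ?_, ?_, ?_, ?_⟩
  · ext i j
    fin_cases i <;> fin_cases j <;> rfl
  · intro h
    apply hc0
    funext j
    have h00 := congrFun (congrFun h 0) 0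
    have h11 := congrFun (congrFun h 1) 1
    have h22 := congrFun (congrFun h 2) 2
    have h01 := congrFun (congrFun h 0) 1
    have h02 := congrFun (congrFun h 0) 2
    have h12 := congrFun (congrFun h 1) 2
    simp at h00 h11 h22 h01 h02 h12
    fin_cases j <;> simpa
  · rw [hAbv]
    simp [dot3, Matrix.mulVec, dotProduct, Fin.sum_univ_three]
    linear_combination (s1^2) * ec0
  · rw [hAcv]
    simp [dot3, Matrix.mulVec, dotProduct, Fin.sum_univ_three]
    linear_combination (s3^2) * ec2
  · rw [hBav]
    simp [dot3, Matrix.mulVec, dotProduct, Fin.sum_univ_three]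
    linear_combination (s5^2) * ec4
  · rw [hBcv]
    simp [dot3, Matrix.mulVec, dotProduct, Fin.sum_univ_three]
    linear_combination (s4^2) * ec3
  · rw [hCav]
    simp [dot3, Matrix.mulVec, dotProduct, Fin.sum_univ_three]
    linear_combination (s6^2) * ec5
  · rw [hCbv]
    simp [dot3, Matrix.mulVec, dotProduct, Fin.sum_univ_three]
    linear_combination (s2^2) * ec1

lemma dot3_conj (T N : Matrix (Fin 3) (Fin 3) ℝ) (x : Fin 3 → ℝ) :
    dot3 x ((Tᵀ * N * T).mulVec x) = dot3 (T.mulVec x) (N.mulVec (T.mulVec x)) := by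
  simp [dot3, Matrix.mulVec, Matrix.mul_apply, dotProduct, Fin.sum_univ_three,
    Matrix.transpose_apply]
  ring

/-- Six points on a conic: let `ABC` and `A'B'C'` be perspective triangles (with sides
`a=BC, b=CA, c=AB` and `a'=B'C', b'=C'A', c'=A'B'`), and define
`A_b = b∩a'`, `A_c = c∩a'`, `B_a = a∩b'`, `B_c = c∩b'`, `C_a = a∩c'`, `C_b = b∩c'`.
Then these six points lie on a (possibly degenerate) conic. -/
theorem six_points_on_conic (A B C A' B' C' Ab Ac Ba Bc Ca Cb : Fin 3 → ℝ)
    (hABC : ¬Coll A B C) (hA'B'C' : ¬Coll A' B' C')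
    (hpersp : ∃ O : Fin 3 → ℝ, O ≠ 0 ∧ Coll A A' O ∧ Coll B B' O ∧ Coll C C' O)
    (hba' : ¬(Coll C A B' ∧ Coll C A C')) (hca' : ¬(Coll A B B' ∧ Coll A B C'))
    (hab' : ¬(Coll B C C' ∧ Coll B C A')) (hcb' : ¬(Coll A B C' ∧ Coll A B A'))
    (hac' : ¬(Coll B C A' ∧ Coll B C B')) (hbc' : ¬(Coll C A A' ∧ Coll C A B'))
    (hAb : Ab ≠ 0) (hAb1 : Coll C A Ab) (hAb2 : Coll B' C' Ab)
    (hAc : Ac ≠ 0) (hAc1 : Coll A B Ac) (hAc2 : Coll B' C' Ac)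
    (hBa : Ba ≠ 0) (hBa1 : Coll B C Ba) (hBa2 : Coll C' A' Ba)
    (hBc : Bc ≠ 0) (hBc1 : Coll A B Bc) (hBc2 : Coll C' A' Bc)
    (hCa : Ca ≠ 0) (hCa1 : Coll B C Ca) (hCa2 : Coll A' B' Ca)
    (hCb : Cb ≠ 0) (hCb1 : Coll C A Cb) (hCb2 : Coll A' B' Cb) :
    ∃ N : Matrix (Fin 3) (Fin 3) ℝ, N.IsSymm ∧ N ≠ 0 ∧
      dot3 Ab (N.mulVec Ab) = 0 ∧ dot3 Ac (N.mulVec Ac) = 0 ∧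
      dot3 Ba (N.mulVec Ba) = 0 ∧ dot3 Bc (N.mulVec Bc) = 0 ∧
      dot3 Ca (N.mulVec Ca) = 0 ∧ dot3 Cb (N.mulVec Cb) = 0 := by
  obtain ⟨O, hO, hOA, hOB, hOC⟩ := hpersp
  have hdet : (Matrix.of ![A, B, C]).det ≠ 0 := fun h => hABC ((coll_iff_det _ _ _).mpr h)
  set P : Matrix (Fin 3) (Fin 3) ℝ := (Matrix.of ![A, B, C])ᵀ with hP
  have hPdet : P.det ≠ 0 := by rwa [hP, Matrix.det_transpose]
  have hPu : IsUnit P.det := isUnit_iff_ne_zero.mpr hPdet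
  set T := P⁻¹ with hT
  have hTP : T * P = 1 := Matrix.nonsing_inv_mul P hPu
  have hPT : P * T = 1 := Matrix.mul_nonsing_inv P hPu
  have hTdet : T.det ≠ 0 := by
    intro h
    have h1 : T.det * P.det = 1 := by rw [← Matrix.det_mul, hTP, Matrix.det_one]
    rw [h, zero_mul] at h1
    exact zero_ne_one h1
  have hPe : ∀ (v : Fin 3 → ℝ) (j : Fin 3), (Matrix.of ![A,B,C]) j = v →
      T.mulVec v = fun i => (1 : Matrix (Fin 3) (Fin 3) ℝ) i j := by
    intro v j hv
    have hPv : P.mulVec (fun i => (1 : Matrix (Fin 3) (Fin 3) ℝ) i j) = v := by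
      funext i
      simp [hP, Matrix.mulVec, dotProduct, Fin.sum_univ_three, Matrix.transpose_apply,
        Matrix.one_apply]
      fin_cases j <;> simp [← hv] <;> fin_cases i <;>
        simp [Matrix.vecHead, Matrix.vecTail]
    rw [← hPv, Matrix.mulVec_mulVec, hTP, Matrix.one_mulVec]
  have hTA : T.mulVec A = ![1,0,0] := by
    rw [hPe A 0 rfl]; funext i; fin_cases i <;> simp [Matrix.one_apply]
  have hTB : T.mulVec B = ![0,1,0] := by
    rw [hPe B 1 rfl]; funext i; fin_cases i <;> simp [Matrix.one_apply]
  have hTC : T.mulVec C = ![0,0,1] := by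
    rw [hPe C 2 rfl]; funext i; fin_cases i <;> simp [Matrix.one_apply]
  have hM3 : ∀ u v w : Fin 3 → ℝ,
      Matrix.of ![T.mulVec u, T.mulVec v, T.mulVec w] = Matrix.of ![u, v, w] * Tᵀ := by
    intro u v w
    ext i j
    fin_cases i <;>
      simp [Matrix.mul_apply, Matrix.mulVec, dotProduct, Fin.sum_univ_three,
        Matrix.transpose_apply] <;> ring
  have collT : ∀ u v w : Fin 3 → ℝ,
      Coll (T.mulVec u) (T.mulVec v) (T.mulVec w) ↔ Coll u v w := by
    intro u v w
    rw [coll_iff_det, coll_iff_det, hM3, Matrix.det_mul, Matrix.det_transpose]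
    constructor
    · intro h
      rcases mul_eq_zero.mp h with h | h
      · exact h
      · exact absurd h hTdet
    · intro h
      rw [h, zero_mul]
  have nzT : ∀ u : Fin 3 → ℝ, u ≠ 0 → T.mulVec u ≠ 0 := by
    intro u hu h
    apply hu
    have h2 : P.mulVec (T.mulVec u) = u := by
      rw [Matrix.mulVec_mulVec, hPT, Matrix.one_mulVec]
    rw [h, Matrix.mulVec_zero] at h2
    exact h2.symm
  obtain ⟨N', hsym, hN0, q1, q2, q3, q4, q5, q6⟩ :=
    coord_case (T.mulVec O) (T.mulVec A') (T.mulVec B') (T.mulVec C')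
      (T.mulVec Ab) (T.mulVec Ac) (T.mulVec Ba) (T.mulVec Bc) (T.mulVec Ca) (T.mulVec Cb)
      (fun h => hA'B'C' ((collT _ _ _).mp h))
      (nzT O hO)
      (by rw [← hTA]; exact (collT _ _ _).mpr hOA)
      (by rw [← hTB]; exact (collT _ _ _).mpr hOB)
      (by rw [← hTC]; exact (collT _ _ _).mpr hOC)
      (by rintro ⟨u1, u2⟩; rw [← hTC, ← hTA] at u1 u2
          exact hba' ⟨(collT _ _ _).mp u1, (collT _ _ _).mp u2⟩)
      (by rintro ⟨u1, u2⟩; rw [← hTA, ← hTB] at u1 u2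
          exact hca' ⟨(collT _ _ _).mp u1, (collT _ _ _).mp u2⟩)
      (by rintro ⟨u1, u2⟩; rw [← hTB, ← hTC] at u1 u2
          exact hab' ⟨(collT _ _ _).mp u1, (collT _ _ _).mp u2⟩)
      (by rintro ⟨u1, u2⟩; rw [← hTA, ← hTB] at u1 u2
          exact hcb' ⟨(collT _ _ _).mp u1, (collT _ _ _).mp u2⟩)
      (by rintro ⟨u1, u2⟩; rw [← hTB, ← hTC] at u1 u2
          exact hac' ⟨(collT _ _ _).mp u1, (collT _ _ _).mp u2⟩)
      (by rintro ⟨u1, u2⟩; rw [← hTC, ← hTA] at u1 u2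
          exact hbc' ⟨(collT _ _ _).mp u1, (collT _ _ _).mp u2⟩)
      (nzT Ab hAb)
      (by rw [← hTC, ← hTA]; exact (collT _ _ _).mpr hAb1)
      ((collT _ _ _).mpr hAb2)
      (nzT Ac hAc)
      (by rw [← hTA, ← hTB]; exact (collT _ _ _).mpr hAc1)
      ((collT _ _ _).mpr hAc2)
      (nzT Ba hBa)
      (by rw [← hTB, ← hTC]; exact (collT _ _ _).mpr hBa1)
      ((collT _ _ _).mpr hBa2)
      (nzT Bc hBc)
      (by rw [← hTA, ← hTB]; exact (collT _ _ _).mpr hBc1)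
      ((collT _ _ _).mpr hBc2)
      (nzT Ca hCa)
      (by rw [← hTB, ← hTC]; exact (collT _ _ _).mpr hCa1)
      ((collT _ _ _).mpr hCa2)
      (nzT Cb hCb)
      (by rw [← hTC, ← hTA]; exact (collT _ _ _).mpr hCb1)
      ((collT _ _ _).mpr hCb2)
  refine ⟨Tᵀ * N' * T, ?_, ?_, ?_, ?_, ?_, ?_, ?_, ?_⟩
  · show (Tᵀ * N' * T)ᵀ = Tᵀ * N' * T
    rw [Matrix.transpose_mul, Matrix.transpose_mul, Matrix.transpose_transpose, hsym,
      Matrix.mul_assoc]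
  · intro h
    apply hN0
    have h2 : N' = Pᵀ * (Tᵀ * N' * T) * P := by
      calc N' = 1 * N' * 1 := by rw [Matrix.one_mul, Matrix.mul_one]
        _ = (T * P)ᵀ * N' * (T * P) := by rw [hTP, Matrix.transpose_one]
        _ = Pᵀ * (Tᵀ * N' * T) * P := by
            rw [Matrix.transpose_mul]
            simp only [Matrix.mul_assoc]
    rw [h, Matrix.mul_zero, Matrix.zero_mul] at h2
    exact h2
  · rw [dot3_conj]; exact q1
  · rw [dot3_conj]; exact q2
  · rw [dot3_conj]; exact q3
  · rw [dot3_conj]; exact q4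
  · rw [dot3_conj]; exact q5
  · rw [dot3_conj]; exact q6
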